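/- Let G be a connected finite simple graph on n ≥ 2 vertices and let e be an edge of the complement of G (i.e., e joins two nonadjacent vertices of G). If tr₂(G) ≤ tr₂(K_{1,n−1}), then tr₂(G + e) < tr₂(K_{1,n−1}), where G + e denotes the graph obtained from G by adding the edge e. -/

import Mathlib

open Matrix Real Finset

namespace VNE

set_option linter.unusedSectionVars false
set_option maxHeartbeats 1000000

variable {V : Type*} [Fintype V] [DecidableEq V]

/-- The density matrix `ρ(G) = L(G) / tr (L(G))` of a graph. -/
noncomputable def rho (G : SimpleGraph V) : Matrix V V ℝ :=
  letI := Classical.decRel G.Adj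
  ((G.lapMatrix ℝ).trace)⁻¹ • G.lapMatrix ℝ

lemma rho_isHermitian (G : SimpleGraph V) : (rho G).IsHermitian := by
  letI := Classical.decRel G.Adj
  have h : (G.lapMatrix ℝ).IsHermitian := (SimpleGraph.posSemidef_lapMatrix ℝ G).1
  unfold rho
  unfold Matrix.IsHermitian at h ⊢
  rw [Matrix.conjTranspose_smul, h, star_trivial]

/-- The eigenvalues of the density matrix of `G`. -/
noncomputable def eigs (G : SimpleGraph V) : V → ℝ :=
  (rho_isHermitian G).eigenvalues

/-- The von Neumann entropy of a graph. -/
noncomputable def vnEntropy (G : SimpleGraph V) : ℝ :=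
  ∑ v, -(eigs G v * Real.logb 2 (eigs G v))

/-- The Rényi α-entropy of a graph. -/
noncomputable def renyiEntropy (α : ℝ) (G : SimpleGraph V) : ℝ :=
  (1 / (1 - α)) * Real.logb 2 (∑ v, eigs G v ^ α)

/-- The Rényi 2-entropy of a graph, `−log₂ tr(ρ(G)²)`. -/
noncomputable def renyi2 (G : SimpleGraph V) : ℝ :=
  - Real.logb 2 ((rho G * rho G).trace)

/-- `tr₂(G) = tr(ρ(G)²)`. -/
noncomputable def tr2 (G : SimpleGraph V) : ℝ :=
  (rho G * rho G).trace

/-- The degree of a vertex, as a real number. -/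
noncomputable def deg (G : SimpleGraph V) (v : V) : ℝ :=
  letI := Classical.decRel G.Adj
  (G.degree v : ℝ)

/-- The degree sum `d_G` of a graph. -/
noncomputable def degSum (G : SimpleGraph V) : ℝ :=
  ∑ v, deg G v

/-- The star `K_{1,n-1}` on `n` vertices, with center the vertex `0`. -/
def starOn (n : ℕ) : SimpleGraph (Fin n) where
  Adj x y := x ≠ y ∧ (x.val = 0 ∨ y.val = 0)
  symm := ⟨fun _ _ h => ⟨h.1.symm, h.2.symm⟩⟩
  loopless := ⟨fun _ h => h.1 rfl⟩

/-! ### Auxiliary lemmas -/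

instance starOn.instDecidableRelAdj {n : ℕ} : DecidableRel (starOn n).Adj :=
  fun _ _ => instDecidableAnd

lemma lap_entry (G : SimpleGraph V) [DecidableRel G.Adj] (i j : V) : (G.lapMatrix ℝ) i j =
    if i = j then (G.degree i : ℝ) else (if G.Adj i j then -1 else 0) := by
  by_cases h : i = j
  · subst h; simp [SimpleGraph.lapMatrix, SimpleGraph.degMatrix]
  · by_cases ha : G.Adj i j <;>
      simp [SimpleGraph.lapMatrix, SimpleGraph.degMatrix, Matrix.diagonal, h, ha]

lemma trace_lap (G : SimpleGraph V) [DecidableRel G.Adj] :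
    (G.lapMatrix ℝ).trace = ∑ v, (G.degree v : ℝ) := by
  simp [Matrix.trace, Matrix.diag, SimpleGraph.lapMatrix, SimpleGraph.degMatrix]

lemma trace_lap_sq (G : SimpleGraph V) [DecidableRel G.Adj] :
    ((G.lapMatrix ℝ) * (G.lapMatrix ℝ)).trace
      = (∑ v, (G.degree v : ℝ)^2) + ∑ v, (G.degree v : ℝ) := by
  rw [Matrix.trace, ← Finset.sum_add_distrib]
  apply Finset.sum_congr rfl
  intro i _
  rw [Matrix.diag_apply, Matrix.mul_apply]
  have key : ∀ j, (G.lapMatrix ℝ) i j * (G.lapMatrix ℝ) j i =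
      if i = j then (G.degree i : ℝ)^2 else (if G.Adj i j then 1 else 0) := by
    intro j
    rw [lap_entry, lap_entry]
    by_cases h : i = j
    · subst h; simp [sq]
    · have h' : ¬ j = i := fun hh => h hh.symm
      simp only [h, h', if_false, G.adj_comm j i]
      split <;> ring
  simp_rw [key]
  rw [Finset.sum_eq_add_sum_sdiff_singleton_of_mem (Finset.mem_univ i)]
  simp only [if_pos rfl]
  congr 1
  have h2 : ∑ x ∈ univ \ {i}, (if i = x then ((G.degree i : ℝ))^2 else (if G.Adj i x then 1 else 0))
      = ∑ x ∈ univ \ {i}, (if G.Adj i x then (1:ℝ) else 0) := by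
    apply Finset.sum_congr rfl
    intro x hx
    rw [Finset.mem_sdiff, Finset.mem_singleton] at hx
    rw [if_neg (fun hh => hx.2 hh.symm)]
  rw [h2]
  have h3 : ∑ x ∈ univ \ {i}, (if G.Adj i x then (1:ℝ) else 0)
      = ∑ x, (if G.Adj i x then (1:ℝ) else 0) := by
    apply Finset.sum_subset (Finset.sdiff_subset)
    intro x _ hx
    have : x = i := by
      by_contra hc
      exact hx (Finset.mem_sdiff.mpr ⟨Finset.mem_univ x, by simpa using hc⟩)
    subst this
    simp
  rw [h3]
  exact (SimpleGraph.degree_eq_sum_if_adj G i).symm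

lemma deg_eq_degree (G : SimpleGraph V) [inst : DecidableRel G.Adj] (v : V) :
    deg G v = (G.degree v : ℝ) := by
  unfold deg
  rw [Subsingleton.elim (Classical.decRel G.Adj) inst]

lemma deg_eq_sum (G : SimpleGraph V) [inst : DecidableRel G.Adj] (x : V) :
    deg G x = ∑ y, if G.Adj x y then (1:ℝ) else 0 := by
  rw [deg_eq_degree]
  exact SimpleGraph.degree_eq_sum_if_adj G x

lemma tr2_eq (G : SimpleGraph V) :
    tr2 G = ((∑ v, deg G v ^ 2) + degSum G) / (degSum G)^2 := by
  letI inst := Classical.decRel G.Adj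
  have h1 : rho G = ((G.lapMatrix ℝ).trace)⁻¹ • G.lapMatrix ℝ := rfl
  have h2 : ∀ v, deg G v = (G.degree v : ℝ) := fun v => rfl
  unfold tr2 degSum
  rw [h1, Matrix.smul_mul, Matrix.mul_smul, smul_smul, Matrix.trace_smul, trace_lap_sq,
    trace_lap]
  simp_rw [h2]
  rw [smul_eq_mul, div_eq_mul_inv, sq, mul_inv]
  ring

lemma deg_starOn {n : ℕ} (hn : 2 ≤ n) (x : Fin n) :
    deg (starOn n) x = if x.val = 0 then ((n:ℝ) - 1) else 1 := by
  have hnp : 0 < n := by omega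
  rw [deg_eq_sum]
  by_cases hx : x.val = 0
  · have key : ∀ y, (if (starOn n).Adj x y then (1:ℝ) else 0)
        = 1 - (if y = x then 1 else 0) := by
      intro y
      by_cases h : y = x
      · subst h; simp [starOn]
      · have : (starOn n).Adj x y := ⟨fun hh => h hh.symm, Or.inl hx⟩
        simp [this, h]
    simp_rw [key]
    rw [Finset.sum_sub_distrib, Finset.sum_const, Finset.sum_ite_eq' univ x]
    simp [hx]
  · set z : Fin n := ⟨0, hnp⟩ with hz
    have key : ∀ y, (if (starOn n).Adj x y then (1:ℝ) else 0)
        = (if y = z then 1 else 0) := by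
      intro y
      by_cases h : y = z
      · subst h
        have : (starOn n).Adj x z := ⟨fun hh => hx (by rw [hh]), Or.inr rfl⟩
        simp [this]
      · have : ¬ (starOn n).Adj x y := by
          rintro ⟨hne, h0 | h0⟩
          · exact hx h0
          · exact h (Fin.ext h0)
        simp [this, h]
    simp_rw [key]
    rw [Finset.sum_ite_eq' univ z]
    simp [hx]

lemma sum_deg_starOn {n : ℕ} (hn : 2 ≤ n) :
    degSum (starOn n) = 2 * ((n:ℝ) - 1) := by
  have hnp : 0 < n := by omega
  set z : Fin n := ⟨0, hnp⟩ with hz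
  have key : ∀ x : Fin n, deg (starOn n) x = (if x = z then ((n:ℝ) - 2) else 0) + 1 := by
    intro x
    rw [deg_starOn hn]
    by_cases h : x = z
    · subst h; simp [hz]; ring
    · have : ¬ x.val = 0 := fun hh => h (Fin.ext hh)
      simp [h, this]
  unfold degSum
  simp_rw [key]
  rw [Finset.sum_add_distrib, Finset.sum_ite_eq' univ z, Finset.sum_const]
  simp
  ring

lemma sum_deg_sq_starOn {n : ℕ} (hn : 2 ≤ n) :
    ∑ x, deg (starOn n) x ^ 2 = (n:ℝ) * ((n:ℝ) - 1) := by
  have hnp : 0 < n := by omega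
  set z : Fin n := ⟨0, hnp⟩ with hz
  have key : ∀ x : Fin n, deg (starOn n) x ^ 2
      = (if x = z then ((n:ℝ)^2 - 2*n) else 0) + 1 := by
    intro x
    rw [deg_starOn hn]
    by_cases h : x = z
    · subst h; simp [hz]; ring
    · have : ¬ x.val = 0 := fun hh => h (Fin.ext hh)
      simp [h, this]
  simp_rw [key]
  rw [Finset.sum_add_distrib, Finset.sum_ite_eq' univ z, Finset.sum_const]
  simp
  ring

lemma tr2_starOn {n : ℕ} (hn : 2 ≤ n) :
    tr2 (starOn n) = ((n:ℝ) + 2) / (4 * ((n:ℝ) - 1)) := by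
  have hn' : (2:ℝ) ≤ (n:ℝ) := by exact_mod_cast hn
  rw [tr2_eq, sum_deg_starOn hn, sum_deg_sq_starOn hn]
  rw [div_eq_div_iff (by nlinarith) (by nlinarith)]
  ring

theorem tr2_add_edge_lt {n : ℕ} (hn : 2 ≤ n) (G : SimpleGraph (Fin n)) (hG : G.Connected)
    (u v : Fin n) (huv : u ≠ v) (hadj : ¬ G.Adj u v)
    (h : tr2 G ≤ tr2 (starOn n)) :
    tr2 (G ⊔ SimpleGraph.fromEdgeSet {s(u, v)}) < tr2 (starOn n) := by
  classical
  set G' := G ⊔ SimpleGraph.fromEdgeSet {s(u, v)} with hG'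
  have hn' : (2:ℝ) ≤ (n:ℝ) := by exact_mod_cast hn
  -- adjacency of G'
  have hadj' : ∀ x y, G'.Adj x y ↔
      (G.Adj x y ∨ ((x = u ∧ y = v) ∨ (x = v ∧ y = u))) := by
    intro x y
    rw [hG']
    simp only [SimpleGraph.sup_adj, SimpleGraph.fromEdgeSet_adj, Set.mem_singleton_iff,
      Sym2.eq, Sym2.rel_iff', Prod.mk.injEq, Prod.swap_prod_mk]
    constructor
    · rintro (hg | ⟨(⟨rfl, rfl⟩ | ⟨rfl, rfl⟩), _⟩) <;> tauto
    · rintro (hg | ⟨rfl, rfl⟩ | ⟨rfl, rfl⟩)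
      · exact Or.inl hg
      · exact Or.inr ⟨Or.inl ⟨rfl, rfl⟩, huv⟩
      · exact Or.inr ⟨Or.inr ⟨rfl, rfl⟩, Ne.symm huv⟩
  -- every vertex has degree at least 1
  have hdegpos : ∀ x : Fin n, (1:ℝ) ≤ deg G x := by
    intro x
    obtain ⟨y, hy⟩ : ∃ y : Fin n, y ≠ x := by
      have : Nontrivial (Fin n) := Fin.nontrivial_iff_two_le.mpr hn
      exact exists_ne x
    obtain ⟨w⟩ := hG.preconnected x y
    have hnn : ¬ w.Nil := SimpleGraph.Walk.not_nil_of_ne (Ne.symm hy)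
    obtain ⟨z, hz, -, -⟩ := SimpleGraph.Walk.not_nil_iff.mp hnn
    rw [deg_eq_degree]
    have : 0 < G.degree x := (G.degree_pos_iff_exists_adj x).mpr ⟨z, hz⟩
    exact_mod_cast this
  -- the degree relation between G' and G
  have hdeg' : ∀ x, deg G' x = deg G x
      + ((if x = u then (1:ℝ) else 0) + (if x = v then 1 else 0)) := by
    intro x
    rw [deg_eq_sum, deg_eq_sum]
    have key : ∀ y, (if G'.Adj x y then (1:ℝ) else 0)
        = (if G.Adj x y then 1 else 0)
          + ((if x = u ∧ y = v then 1 else 0) + (if x = v ∧ y = u then 1 else 0)) := by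
      intro y
      by_cases hg : G.Adj x y
      · have h1 : ¬ (x = u ∧ y = v) := by rintro ⟨rfl, rfl⟩; exact hadj hg
        have h2 : ¬ (x = v ∧ y = u) := by rintro ⟨rfl, rfl⟩; exact hadj hg.symm
        simp [hadj' x y, hg, h1, h2]
      · by_cases h1 : x = u ∧ y = v
        · obtain ⟨rfl, rfl⟩ := h1
          simp [hadj' x y, hg, huv]
        · by_cases h2 : x = v ∧ y = u
          · obtain ⟨rfl, rfl⟩ := h2
            simp [hadj' x y, hg, Ne.symm huv]
          · simp [hadj' x y, hg, h1, h2]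
    simp_rw [key]
    rw [Finset.sum_add_distrib, Finset.sum_add_distrib, ← deg_eq_sum]
    congr 1
    congr 1
    · by_cases hx : x = u
      · subst hx; simp [Finset.sum_ite_eq' univ v (fun _ => (1:ℝ))]
      · simp [hx]
    · by_cases hx : x = v
      · subst hx; simp [Finset.sum_ite_eq' univ u (fun _ => (1:ℝ))]
      · simp [hx]
  -- degree sums of G'
  have hDsum : degSum G' = degSum G + 2 := by
    unfold degSum
    simp_rw [hdeg']
    rw [Finset.sum_add_distrib, Finset.sum_add_distrib, Finset.sum_ite_eq' univ u,
      Finset.sum_ite_eq' univ v]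
    simp
    ring
  have hS' : ∑ x, deg G' x ^ 2
      = (∑ x, deg G x ^ 2) + (2 * deg G u + 2 * deg G v + 2) := by
    have key2 : ∀ x, deg G' x ^ 2 = deg G x ^ 2
        + ((if x = u then 2 * deg G u + 1 else 0) + (if x = v then 2 * deg G v + 1 else 0)) := by
      intro x
      rw [hdeg' x]
      rcases eq_or_ne x u with rfl | hxu
      · simp [huv]; ring
      · rcases eq_or_ne x v with rfl | hxv
        · simp [hxu]; ring
        · simp [hxu, hxv]
    simp_rw [key2]
    rw [Finset.sum_add_distrib, Finset.sum_add_distrib, Finset.sum_ite_eq' univ u,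
      Finset.sum_ite_eq' univ v]
    simp
    ring
  -- inequality (a) : degSum G ≥ deg u + deg v + (n - 2)
  have hsub : ({u, v} : Finset (Fin n)) ⊆ univ := Finset.subset_univ _
  have hsplit : (∑ x ∈ univ \ ({u, v} : Finset (Fin n)), deg G x)
      + (deg G u + deg G v) = degSum G := by
    rw [← Finset.sum_pair huv (f := deg G)]
    exact Finset.sum_sdiff hsub
  have hcard : ((univ \ ({u, v} : Finset (Fin n))).card : ℝ) = (n:ℝ) - 2 := by
    rw [Finset.card_sdiff_of_subset hsub, Finset.card_pair huv]
    rw [Finset.card_univ, Fintype.card_fin]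
    rw [Nat.cast_sub hn]
    norm_num
  have ha : deg G u + deg G v + ((n:ℝ) - 2) ≤ degSum G := by
    have hlow : ((n:ℝ) - 2) ≤ ∑ x ∈ univ \ ({u, v} : Finset (Fin n)), deg G x := by
      rw [← hcard]
      calc ((univ \ ({u, v} : Finset (Fin n))).card : ℝ)
          = ∑ _x ∈ univ \ ({u, v} : Finset (Fin n)), (1:ℝ) := by
            rw [Finset.sum_const, nsmul_eq_mul, mul_one]
        _ ≤ ∑ x ∈ univ \ ({u, v} : Finset (Fin n)), deg G x :=
            Finset.sum_le_sum (fun x _ => hdegpos x)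
    linarith
  -- inequality (b) : degSum G ≥ 2 (deg u + deg v)
  have hrestrict : ∀ w : Fin n, ¬ G.Adj u w → ¬ G.Adj v w →
      (∑ x ∈ univ \ ({u, v} : Finset (Fin n)), (if G.Adj x w then (1:ℝ) else 0))
        = deg G w := by
    intro w hwu hwv
    rw [deg_eq_sum]
    have : (∑ x ∈ univ \ ({u, v} : Finset (Fin n)), (if G.Adj x w then (1:ℝ) else 0))
        = ∑ x, (if G.Adj x w then (1:ℝ) else 0) := by
      apply Finset.sum_subset (Finset.sdiff_subset)
      intro x _ hx
      have hx' : x = u ∨ x = v := by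
        by_contra hc
        push_neg at hc
        exact hx (Finset.mem_sdiff.mpr ⟨Finset.mem_univ x, by simp [hc.1, hc.2]⟩)
      rcases hx' with rfl | rfl
      · simp [hwu]
      · simp [hwv]
    rw [this]
    apply Finset.sum_congr rfl
    intro x _
    rw [G.adj_comm x w]
  have hb : 2 * (deg G u + deg G v) ≤ degSum G := by
    have hxb : ∀ x ∈ univ \ ({u, v} : Finset (Fin n)),
        (if G.Adj x u then (1:ℝ) else 0) + (if G.Adj x v then 1 else 0) ≤ deg G x := by
      intro x _
      rw [deg_eq_sum]
      have hle : ∑ y ∈ ({u, v} : Finset (Fin n)), (if G.Adj x y then (1:ℝ) else 0)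
          ≤ ∑ y, (if G.Adj x y then (1:ℝ) else 0) := by
        apply Finset.sum_le_sum_of_subset_of_nonneg (Finset.subset_univ _)
        intro y _ _
        positivity
      rwa [Finset.sum_pair huv] at hle
    have hsum2 : deg G u + deg G v
        ≤ ∑ x ∈ univ \ ({u, v} : Finset (Fin n)), deg G x := by
      have := Finset.sum_le_sum hxb
      rw [Finset.sum_add_distrib] at this
      rw [hrestrict u (G.loopless.irrefl u) (fun hh => hadj hh.symm),
        hrestrict v hadj (G.loopless.irrefl v)] at this
      exact this
    linarith
  -- final computation
  have hs2 : (2:ℝ) ≤ deg G u + deg G v := by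
    have := hdegpos u; have := hdegpos v; linarith
  have hDpos : (0:ℝ) < degSum G := by linarith
  have hden1 : (0:ℝ) < (degSum G)^2 := by positivity
  have hden2 : (0:ℝ) < 4 * ((n:ℝ) - 1) := by linarith
  have hden3 : (0:ℝ) < (degSum G + 2)^2 := by positivity
  rw [tr2_eq, tr2_starOn hn] at h ⊢
  rw [div_le_div_iff₀ hden1 hden2] at h
  rw [hDsum, hS', div_lt_div_iff₀ hden3 hden2]
  set S := ∑ x, deg G x ^ 2
  set D := degSum G
  set s := deg G u + deg G v with hsdef
  have key : 2 * ((n:ℝ) - 1) * (s + 2) < ((n:ℝ) + 2) * (D + 1) := by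
    rcases le_or_gt s (n:ℝ) with hc | hc
    · nlinarith
    · nlinarith
  nlinarith

end VNE
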